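/- Let φ: 𝔼_2 → 𝔼_2 be a sequential endomorphism and suppose P := φ(I) is a rank-one orthogonal projection. Then φ(A) = P φ(A) P for all A ∈ 𝔼_2, and the map ψ: 𝔼_2 → 𝔼_2 defined by ψ(A) = φ(A) + (I - P) is a sequential endomorphism with ψ(I) = I. -/

import Mathlib

open Matrix ComplexOrder

/-- The square root of a positive semidefinite matrix, as defined in the older Mathlib
(`Matrix.PosSemidef.sqrt`, since removed). -/
noncomputable def Matrix.PosSemidef.sqrt {n : Type*} [Fintype n] [DecidableEq n]
    {A : Matrix n n ℂ} (hA : A.PosSemidef) : Matrix n n ℂ :=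
  hA.1.eigenvectorUnitary.1 * diagonal ((↑) ∘ Real.sqrt ∘ hA.1.eigenvalues) *
    (star hA.1.eigenvectorUnitary : Matrix n n ℂ)

open scoped MatrixOrder in
theorem Matrix.PosSemidef.sqrt_eq_cfcSqrt {A : Matrix (Fin 2) (Fin 2) ℂ} (hA : A.PosSemidef) :
    hA.sqrt = CFC.sqrt A := by
  rw [CFC.sqrt_eq_real_sqrt A hA.nonneg, cfcₙ_eq_cfc, hA.1.cfc_eq, IsHermitian.cfc,
    Unitary.conjStarAlgAut_apply]
  rfl

open scoped MatrixOrder in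
theorem Matrix.PosSemidef.posSemidef_sqrt {A : Matrix (Fin 2) (Fin 2) ℂ} (hA : A.PosSemidef) :
    hA.sqrt.PosSemidef := by
  rw [hA.sqrt_eq_cfcSqrt]
  exact (CFC.sqrt_nonneg A).posSemidef

open scoped MatrixOrder in
theorem Matrix.PosSemidef.sqrt_mul_self {A : Matrix (Fin 2) (Fin 2) ℂ} (hA : A.PosSemidef) :
    hA.sqrt * hA.sqrt = A := by
  rw [hA.sqrt_eq_cfcSqrt]
  exact CFC.sqrt_mul_sqrt_self A hA.nonneg

open scoped MatrixOrder in
theorem Matrix.PosSemidef.eq_sqrt_of_sq_eq {A B : Matrix (Fin 2) (Fin 2) ℂ} (hB : B.PosSemidef)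
    (hA : A.PosSemidef) (h : B ^ 2 = A) : B = hA.sqrt := by
  rw [hA.sqrt_eq_cfcSqrt, eq_comm, CFC.sqrt_eq_iff A B hA.nonneg hB.nonneg, ← sq, h]

/-- A 2×2 effect: positive semidefinite and below the identity in the Loewner order. -/
def IsEffect2 (A : Matrix (Fin 2) (Fin 2) ℂ) : Prop :=
  A.PosSemidef ∧ (1 - A).PosSemidef

/-- If φ is a sequential endomorphism of 𝔼₂ and P = φ(I) is a rank-one orthogonal
projection, then φ(A) = Pφ(A)P for all effects A, and ψ(A) = φ(A) + (I - P) is a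
unital sequential endomorphism. -/
theorem sequential_endo_rank_one_unit
    (φ : Matrix (Fin 2) (Fin 2) ℂ → Matrix (Fin 2) (Fin 2) ℂ)
    (hmaps : ∀ A : Matrix (Fin 2) (Fin 2) ℂ, IsEffect2 A → IsEffect2 (φ A))
    (hseq : ∀ (A B : Matrix (Fin 2) (Fin 2) ℂ) (hA : IsEffect2 A)
      (hB : IsEffect2 B),
      φ (hA.1.sqrt * B * hA.1.sqrt) =
        (hmaps A hA).1.sqrt * φ B * (hmaps A hA).1.sqrt)
    (hPherm : (φ 1).IsHermitian) (hPidem : φ 1 * φ 1 = φ 1)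
    (hPrank : (φ 1).rank = 1) :
    (∀ A : Matrix (Fin 2) (Fin 2) ℂ, IsEffect2 A → φ A = φ 1 * φ A * φ 1) ∧
    (∀ A : Matrix (Fin 2) (Fin 2) ℂ, IsEffect2 A →
      IsEffect2 (φ A + (1 - φ 1))) ∧
    (∀ (A B : Matrix (Fin 2) (Fin 2) ℂ) (hA : IsEffect2 A) (hB : IsEffect2 B)
      (h : (φ A + (1 - φ 1)).PosSemidef),
      φ (hA.1.sqrt * B * hA.1.sqrt) + (1 - φ 1) =
        h.sqrt * (φ B + (1 - φ 1)) * h.sqrt) ∧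
    φ 1 + (1 - φ 1) = 1 := by
  have h1 : IsEffect2 (1 : Matrix (Fin 2) (Fin 2) ℂ) :=
    ⟨Matrix.PosSemidef.one, by rw [sub_self]; exact Matrix.PosSemidef.zero⟩
  set P : Matrix (Fin 2) (Fin 2) ℂ := φ 1 with hPdef
  have hP : P.PosSemidef := (hmaps 1 h1).1
  have hE : (1 - P).PosSemidef := (hmaps 1 h1).2
  -- sqrt of 1 is 1
  have hsqrt1 : h1.1.sqrt = 1 :=
    (Matrix.PosSemidef.eq_sqrt_of_sq_eq Matrix.PosSemidef.one h1.1 (one_pow 2)).symm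
  -- sqrt of P is P
  have hsqrtP : (hmaps 1 h1).1.sqrt = P :=
    (Matrix.PosSemidef.eq_sqrt_of_sq_eq hP (hmaps 1 h1).1 (by rw [pow_two, hPidem])).symm
  -- key: φ A = P * φ A * P
  have key : ∀ A : Matrix (Fin 2) (Fin 2) ℂ, IsEffect2 A → φ A = P * φ A * P := by
    intro A hA
    have := hseq 1 A h1 hA
    rw [hsqrt1, hsqrtP, one_mul, mul_one] at this
    exact this
  -- left/right absorption
  have hPl : ∀ A : Matrix (Fin 2) (Fin 2) ℂ, IsEffect2 A → P * φ A = φ A := by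
    intro A hA
    conv_lhs => rw [key A hA]
    rw [← mul_assoc, ← mul_assoc, hPidem, ← key A hA]
  have hPr : ∀ A : Matrix (Fin 2) (Fin 2) ℂ, IsEffect2 A → φ A * P = φ A := by
    intro A hA
    conv_lhs => rw [key A hA]
    rw [mul_assoc, mul_assoc, hPidem, ← mul_assoc, ← key A hA]
  have hEE : (1 - P) * (1 - P) = 1 - P := by
    rw [sub_mul, mul_sub, mul_sub, one_mul, mul_one, hPidem]
    simp
  -- sqrt of φ A is killed by (1 - P)
  have hES : ∀ (A : Matrix (Fin 2) (Fin 2) ℂ) (hA : IsEffect2 A),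
      (1 - P) * (hmaps A hA).1.sqrt = 0 := by
    intro A hA
    have hS := (hmaps A hA).1.posSemidef_sqrt
    have hself : ((1 - P) * (hmaps A hA).1.sqrt) *
        ((1 - P) * (hmaps A hA).1.sqrt)ᴴ = 0 := by
      rw [conjTranspose_mul, hS.isHermitian.eq, hE.isHermitian.eq]
      have hmm : (1 - P) * ((hmaps A hA).1.sqrt * (hmaps A hA).1.sqrt) * (1 - P) = 0 := by
        rw [(hmaps A hA).1.sqrt_mul_self, sub_mul, one_mul, hPl A hA, sub_self,
          zero_mul]
      calc (1 - P) * (hmaps A hA).1.sqrt * ((hmaps A hA).1.sqrt * (1 - P))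
          = (1 - P) * ((hmaps A hA).1.sqrt * (hmaps A hA).1.sqrt) * (1 - P) := by
            noncomm_ring
        _ = 0 := hmm
    exact Matrix.self_mul_conjTranspose_eq_zero.mp hself
  have hSE : ∀ (A : Matrix (Fin 2) (Fin 2) ℂ) (hA : IsEffect2 A),
      (hmaps A hA).1.sqrt * (1 - P) = 0 := by
    intro A hA
    have := congrArg conjTranspose (hES A hA)
    rwa [conjTranspose_mul, (hmaps A hA).1.posSemidef_sqrt.isHermitian.eq,
      hE.isHermitian.eq, conjTranspose_zero] at this
  -- effect property of ψ
  have heff : ∀ A : Matrix (Fin 2) (Fin 2) ℂ, IsEffect2 A →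
      IsEffect2 (φ A + (1 - P)) := by
    intro A hA
    refine ⟨(hmaps A hA).1.add hE, ?_⟩
    have h2 : 1 - (φ A + (1 - P)) = P * (1 - φ A) * Pᴴ := by
      rw [hP.isHermitian.eq, mul_sub, mul_one, sub_mul, hPidem, hPl A hA, hPr A hA]
      abel
    rw [h2]
    exact (hmaps A hA).2.mul_mul_conjTranspose_same P
  refine ⟨key, heff, ?_, by abel⟩
  intro A B hA hB h
  -- identify the sqrt of φ A + (1 - P)
  have hSsum : ((hmaps A hA).1.sqrt + (1 - P)).PosSemidef :=
    (hmaps A hA).1.posSemidef_sqrt.add hE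
  have hsq : ((hmaps A hA).1.sqrt + (1 - P)) ^ 2 = φ A + (1 - P) := by
    rw [pow_two, add_mul, mul_add, mul_add, (hmaps A hA).1.sqrt_mul_self,
      hSE A hA, hES A hA, hEE]
    abel
  have hsqrtQ : h.sqrt = (hmaps A hA).1.sqrt + (1 - P) :=
    (hSsum.eq_sqrt_of_sq_eq h hsq).symm
  rw [hsqrtQ, hseq A B hA hB]
  have hEB : (1 - P) * φ B = 0 := by
    rw [sub_mul, one_mul, hPl B hB, sub_self]
  have hBE : φ B * (1 - P) = 0 := by
    rw [mul_sub, mul_one, hPr B hB, sub_self]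
  set S := (hmaps A hA).1.sqrt with hSdef
  have hstep1 : (S + (1 - P)) * (φ B + (1 - P)) = S * φ B + (1 - P) := by
    rw [add_mul, mul_add, mul_add, hSE A hA, hEB, hEE]
    abel
  have hstep2 : (S * φ B + (1 - P)) * (S + (1 - P)) = S * φ B * S + (1 - P) := by
    rw [add_mul, mul_add, mul_add, mul_assoc S (φ B) (1 - P), hBE, mul_zero,
      hES A hA, hEE]
    abel
  rw [hstep1, hstep2]
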